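/- Let l ≥ 3 be an integer and let C ⊆ F₂^m be a binary linear code in which every codeword has even Hamming weight. Then Σ_{v∈C} (i tan(2π/2^l))^{w_H(v)} = (sec(2π/2^l))^m holds in ℂ if and only if 2^l divides m − 2·w_H(w) (as integers) for every w ∈ C^⊥. -/

import Mathlib

/-!
Write `t = i tan θ` with `θ = 2π/2^l`. Expanding `∏ⱼ (1 + (-1)^{wⱼ} t)` over `F₂^m` and summing
over the dual code (MacWilliams) gives
`|C^⊥| · Σ_{v∈C} t^{w_H(v)} = Σ_{w∈C^⊥} (1+t)^{m-w_H(w)} (1-t)^{w_H(w)}`.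
Since `1 ± t = sec θ · e^{± iθ}`, the right-hand side is `sec^m θ · Σ_{w∈C^⊥} e^{iθ(m - 2w_H(w))}`.
A sum of `|C^⊥|` unit complex numbers equals `|C^⊥|` only if every term is `1`, i.e. only if
`θ(m - 2w_H(w)) ∈ 2πℤ`, i.e. `2^l ∣ m - 2w_H(w)`, for every `w ∈ C^⊥`.
-/

open Matrix Finset

lemma ZMod.eq_zero_or_eq_one : ∀ a : ZMod 2, a = 0 ∨ a = 1 := by
  decide

section BinarySign

variable {R : Type*} [CommRing R]

def binarySign (a : ZMod 2) : R := (-1) ^ a.val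

@[simp] lemma binarySign_zero : binarySign (0 : ZMod 2) = (1 : R) := pow_zero _

@[simp] lemma binarySign_one : binarySign (1 : ZMod 2) = (-1 : R) := pow_one _

lemma binarySign_add (a b : ZMod 2) : binarySign (a + b) = (binarySign a * binarySign b : R) := by
  rw [binarySign, binarySign, binarySign, ← pow_add, ZMod.val_add, ← neg_one_pow_eq_pow_mod_two]

lemma binarySign_sum {ι : Type*} (s : Finset ι) (f : ι → ZMod 2) :
    binarySign (∑ i ∈ s, f i) = ∏ i ∈ s, (binarySign (f i) : R) := by
  induction s using Finset.cons_induction with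
  | empty => simp
  | cons i s hi ih => rw [sum_cons, prod_cons, binarySign_add, ih]

lemma binarySign_add_binarySign_add_one (a : ZMod 2) :
    binarySign a + binarySign (a + 1) = (0 : R) := by
  rw [binarySign_add, binarySign_one]
  ring

lemma one_add_binarySign_mul_eq_sum (a : ZMod 2) (t : R) :
    1 + binarySign a * t = ∑ b : ZMod 2, binarySign (a * b) * t ^ b.val := by
  rw [show (univ : Finset (ZMod 2)) = {0, 1} from rfl, sum_pair zero_ne_one]
  simp [ZMod.val_one]

end BinarySign

lemma hammingNorm_eq_sum_val {ι : Type*} [Fintype ι] (v : ι → ZMod 2) :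
    hammingNorm v = ∑ i, (v i).val := by
  rw [hammingNorm, card_filter]
  refine sum_congr rfl fun i _ => ?_
  obtain h | h := (v i).eq_zero_or_eq_one <;> simp [h, ZMod.val_one]

section DualCode

variable {K ι : Type*} [Field K] [Fintype ι]

def dualCode (C : Submodule K (ι → K)) : Submodule K (ι → K) :=
  LinearMap.BilinForm.orthogonal (dotProductBilin K K) C

lemma mem_dualCode {C : Submodule K (ι → K)} {w : ι → K} :
    w ∈ dualCode C ↔ ∀ v ∈ C, w ⬝ᵥ v = 0 := by
  simp [dualCode, LinearMap.BilinForm.mem_orthogonal_iff, dotProduct_comm]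

lemma dualCode_dualCode (C : Submodule K (ι → K)) : dualCode (dualCode C) = C := by
  have hsymm : ∀ v w : ι → K, dotProductBilin K K v w = dotProductBilin K K w v :=
    fun v w => dotProduct_comm v w
  refine LinearMap.BilinForm.orthogonal_orthogonal (B := dotProductBilin K K)
    ⟨fun v hv => ?_, fun w hw => ?_⟩ (fun v w h => (hsymm v w).symm.trans h) C
  · exact dotProduct_eq_zero v hv
  · exact dotProduct_eq_zero w fun v => (hsymm w v).trans (hw v)

end DualCode

section WeightEnumerator

variable {R ι : Type*} [CommRing R] [Fintype ι]

lemma prod_one_add_binarySign_mul_eq_pow (w : ι → ZMod 2) (t : R) :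
    ∏ i, (1 + binarySign (w i) * t) =
      (1 + t) ^ (Fintype.card ι - hammingNorm w) * (1 - t) ^ hammingNorm w := by
  have hsign : ∀ i, 1 + binarySign (w i) * t = if w i = 0 then 1 + t else 1 - t := by
    intro i
    obtain h | h := (w i).eq_zero_or_eq_one <;> simp [h, sub_eq_add_neg]
  have hcard : #{i | w i = 0} = Fintype.card ι - hammingNorm w := by
    have := card_filter_add_card_filter_not (s := univ) (fun i => w i = 0)
    rw [card_univ] at this
    simp only [hammingNorm, ne_eq]
    omega
  simp_rw [hsign, prod_ite, prod_const, hcard]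
  rfl

variable [DecidableEq ι]

lemma prod_one_add_binarySign_mul_eq_sum (w : ι → ZMod 2) (t : R) :
    ∏ i, (1 + binarySign (w i) * t) =
      ∑ v : ι → ZMod 2, binarySign (w ⬝ᵥ v) * t ^ hammingNorm v := by
  simp_rw [one_add_binarySign_mul_eq_sum, Fintype.prod_sum, prod_mul_distrib, ← binarySign_sum,
    prod_pow_eq_pow_sum, hammingNorm_eq_sum_val]
  rfl

open scoped Classical in
lemma sum_binarySign_dotProduct (D : Submodule (ZMod 2) (ι → ZMod 2)) (v : ι → ZMod 2) :
    ∑ w ∈ univ.filter (· ∈ D), (binarySign (w ⬝ᵥ v) : R) =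
      if v ∈ dualCode D then (#(univ.filter (· ∈ D)) : R) else 0 := by
  split_ifs with hv
  · rw [card_eq_sum_ones, Nat.cast_sum, Nat.cast_one]
    refine sum_congr rfl fun w hw => ?_
    rw [dotProduct_comm, mem_dualCode.mp hv w (mem_filter.mp hw).2, binarySign_zero]
  · obtain ⟨w₀, hw₀, hvw₀⟩ : ∃ w₀ ∈ D, v ⬝ᵥ w₀ ≠ 0 := by simpa [mem_dualCode] using hv
    have hw₀v : w₀ ⬝ᵥ v = 1 := by
      rw [dotProduct_comm]
      exact (v ⬝ᵥ w₀).eq_zero_or_eq_one.resolve_left hvw₀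
    -- translation by `w₀` is a fixed-point-free involution of `D` flipping the sign
    refine sum_involution (fun w _ => w + w₀) (fun w _ => ?_) (fun w _ _ => ?_)
      (fun w hw => ?_) (fun w _ => ?_)
    · rw [add_dotProduct, hw₀v, binarySign_add_binarySign_add_one]
    · rw [Ne, add_eq_left]
      rintro rfl
      simp at hw₀v
    · simpa using D.add_mem (mem_filter.mp hw).2 hw₀
    · funext i
      rw [Pi.add_apply, Pi.add_apply, add_assoc, CharTwo.add_self_eq_zero, add_zero]

open scoped Classical in
/-- The MacWilliams identity for the weight enumerator of `C`, evaluated at `(1, t)`. -/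
theorem card_dualCode_mul_sum_pow_hammingNorm (C : Submodule (ZMod 2) (ι → ZMod 2)) (t : R) :
    (#(univ.filter (· ∈ dualCode C)) : R) * ∑ v ∈ univ.filter (· ∈ C), t ^ hammingNorm v =
      ∑ w ∈ univ.filter (· ∈ dualCode C),
        (1 + t) ^ (Fintype.card ι - hammingNorm w) * (1 - t) ^ hammingNorm w := by
  calc _ = ∑ v, (∑ w ∈ univ.filter (· ∈ dualCode C), binarySign (w ⬝ᵥ v)) * t ^ hammingNorm v := by
        simp_rw [sum_binarySign_dotProduct, dualCode_dualCode, ite_mul, zero_mul, ← sum_filter,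
          mul_sum]
    _ = _ := by
        simp_rw [sum_mul, ← prod_one_add_binarySign_mul_eq_pow, prod_one_add_binarySign_mul_eq_sum]
        exact sum_comm

end WeightEnumerator

section Trigonometry

open Complex

lemma one_add_I_mul_tan {θ : ℝ} (h : Real.cos θ ≠ 0) :
    1 + I * Real.tan θ = (Real.cos θ : ℂ)⁻¹ * exp (θ * I) := by
  have : (Real.cos θ : ℂ) ≠ 0 := by exact_mod_cast h
  rw [exp_mul_I, ← ofReal_cos, ← ofReal_sin, Real.tan_eq_sin_div_cos, ofReal_div]
  field_simp

lemma one_add_I_mul_tan_pow_mul_one_sub_pow {θ : ℝ} (h : Real.cos θ ≠ 0) {k n : ℕ} (hk : k ≤ n) :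
    (1 + I * Real.tan θ) ^ (n - k) * (1 - I * Real.tan θ) ^ k =
      (Real.cos θ : ℂ)⁻¹ ^ n * exp (((n - 2 * k : ℤ) * θ : ℝ) * I) := by
  have h' : Real.cos (-θ) ≠ 0 := by rwa [Real.cos_neg]
  have hsub : 1 - I * Real.tan θ = (Real.cos θ : ℂ)⁻¹ * exp ((-θ : ℝ) * I) := by
    rw [← Real.cos_neg, ← one_add_I_mul_tan h', Real.tan_neg, ofReal_neg]
    ring
  rw [one_add_I_mul_tan h, hsub, mul_pow, mul_pow, ← exp_nat_mul, ← exp_nat_mul, mul_mul_mul_comm,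
    pow_sub_mul_pow _ hk, ← exp_add]
  congr 2
  push_cast [Nat.cast_sub hk]
  ring

lemma sum_exp_mul_I_eq_card_iff {ι : Type*} (s : Finset ι) (x : ι → ℝ) :
    ∑ i ∈ s, exp (x i * I) = #s ↔ ∀ i ∈ s, Real.cos (x i) = 1 := by
  constructor
  · intro h
    have hre : ∑ i ∈ s, Real.cos (x i) = ∑ i ∈ s, 1 := by
      simpa [re_sum, exp_ofReal_mul_I_re] using congrArg re h
    exact (sum_eq_sum_iff_of_le fun i _ => Real.cos_le_one (x i)).mp hre
  · intro h
    rw [card_eq_sum_ones, Nat.cast_sum]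
    refine sum_congr rfl fun i hi => ?_
    obtain ⟨n, hn⟩ := (Real.cos_eq_one_iff _).mp (h i hi)
    rw [← hn]
    push_cast
    simpa [mul_assoc] using exp_int_mul_two_pi_mul_I n

end Trigonometry

lemma cos_int_mul_two_pi_div_eq_one_iff {q : ℤ} (hq : q ≠ 0) (d : ℤ) :
    Real.cos (d * (2 * Real.pi / q)) = 1 ↔ q ∣ d := by
  have hq' : (q : ℝ) ≠ 0 := by exact_mod_cast hq
  have h2π : 2 * Real.pi ≠ 0 := by positivity
  rw [Real.cos_eq_one_iff, dvd_def]
  refine exists_congr fun n => ?_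
  rw [mul_div_assoc', eq_div_iff hq', mul_right_comm, mul_left_inj' h2π, eq_comm, mul_comm]
  exact_mod_cast Iff.rfl

lemma cos_two_pi_div_two_pow_pos {l : ℕ} (hl : 3 ≤ l) : 0 < Real.cos (2 * Real.pi / 2 ^ l) := by
  have h8 : (8 : ℝ) ≤ 2 ^ l := by
    calc (8 : ℝ) = 2 ^ 3 := by norm_num
      _ ≤ 2 ^ l := pow_le_pow_right₀ one_le_two hl
  refine Real.cos_pos_of_mem_Ioo
    ⟨by linarith [Real.pi_pos, show 0 < 2 * Real.pi / 2 ^ l by positivity], ?_⟩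
  rw [div_lt_iff₀ (by positivity)]
  nlinarith [Real.pi_pos]

open scoped Classical in
theorem divisibility_iff_trig_identity_general (m l : ℕ) (hl : 3 ≤ l)
    (C : Submodule (ZMod 2) (Fin m → ZMod 2)) :
    (∑ v ∈ Finset.univ.filter (fun v : Fin m → ZMod 2 => v ∈ C),
        (Complex.I * Real.tan (2 * Real.pi / 2 ^ l)) ^ hammingNorm v
      = ((Real.cos (2 * Real.pi / 2 ^ l) : ℂ))⁻¹ ^ m)
    ↔ ∀ w : Fin m → ZMod 2, (∀ v ∈ C, w ⬝ᵥ v = 0) →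
        (2 ^ l : ℤ) ∣ ((m : ℤ) - 2 * (hammingNorm w : ℤ)) := by
  set θ := 2 * Real.pi / 2 ^ l
  have hcos : Real.cos θ ≠ 0 := (cos_two_pi_div_two_pow_pos hl).ne'
  have hD : (#(univ.filter (· ∈ dualCode C)) : ℂ) ≠ 0 :=
    Nat.cast_ne_zero.mpr (card_ne_zero_of_mem (mem_filter.mpr ⟨mem_univ 0, zero_mem _⟩))
  have key := card_dualCode_mul_sum_pow_hammingNorm C (Complex.I * Real.tan θ)
  rw [Fintype.card_fin] at key
  simp_rw [one_add_I_mul_tan_pow_mul_one_sub_pow hcos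
    (hammingNorm_le_card_fintype.trans_eq (Fintype.card_fin m)), ← mul_sum] at key
  rw [← mul_right_inj' hD, key, mul_comm (_ : ℂ) (_ ^ m),
    mul_right_inj' (pow_ne_zero _ (inv_ne_zero (by exact_mod_cast hcos))),
    sum_exp_mul_I_eq_card_iff]
  simp only [mem_filter, mem_univ, true_and, mem_dualCode]
  refine forall_congr' fun w => imp_congr_right fun _ => ?_
  have := cos_int_mul_two_pi_div_eq_one_iff (q := 2 ^ l) (pow_ne_zero _ two_ne_zero)
    (m - 2 * hammingNorm w)
  rwa [Int.cast_pow, Int.cast_ofNat] at this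

open scoped Classical in
/-- Lemma 3 of the paper. Let `l ≥ 3` and let `C ⊆ F₂^m` be a binary linear
code in which every codeword has even Hamming weight. Then
`Σ_{v∈C} (i tan(2π/2^l))^{w_H(v)} = (sec(2π/2^l))^m` holds in `ℂ` if and only if
`2^l` divides `m − 2·w_H(w)` (as integers) for every `w` in the dual code `C^⊥`. -/
theorem divisibility_iff_trig_identity (m l : ℕ) (hl : 3 ≤ l)
    (C : Submodule (ZMod 2) (Fin m → ZMod 2))
    (hev : ∀ v ∈ C, Even (hammingNorm v)) :
    (∑ v ∈ Finset.univ.filter (fun v : Fin m → ZMod 2 => v ∈ C),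
        (Complex.I * Real.tan (2 * Real.pi / 2 ^ l)) ^ hammingNorm v
      = ((Real.cos (2 * Real.pi / 2 ^ l) : ℂ))⁻¹ ^ m)
    ↔ ∀ w : Fin m → ZMod 2, (∀ v ∈ C, w ⬝ᵥ v = 0) →
        (2 ^ l : ℤ) ∣ ((m : ℤ) - 2 * (hammingNorm w : ℤ)) :=
  divisibility_iff_trig_identity_general m l hl C
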